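/- arXiv:1702.01673 — 7 statements merged into one kernel-verified Lean document; each statement's English description precedes it below -/
import Mathlib

section
/- Let μ be a compactly supported Borel probability measure on ℝ and let I ⊆ ℝ be an interval (a convex subset of ℝ) with I ∩ supp(μ) = ∅. Then the real-valued function x ↦ ∫_ℝ 1/(x−t) dμ(t) is strictly decreasing on I. -/
open MeasureTheory Complex Filter Topology

/-- The topological support of a measure: the set of points all of whose neighbourhoods
have nonzero measure.  This is the smallest closed set of full measure (for Borel measures
on second-countable spaces). -/
def measureSupport {α : Type*} [TopologicalSpace α] [MeasurableSpace α] (μ : Measure α) : Set α :=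
  {x | ∀ U ∈ nhds x, μ U ≠ 0}

theorem measureSupport_eq_support {α : Type*} [TopologicalSpace α] [MeasurableSpace α]
    (μ : Measure α) : measureSupport μ = μ.support := by
  ext x
  simp only [measureSupport, Set.mem_ofPred_eq, Measure.mem_support_iff_forall, pos_iff_ne_zero]

theorem integral_lt_integral_of_ae_lt {α : Type*} [MeasurableSpace α] {μ : Measure α}
    [NeZero μ] {f g : α → ℝ} (hf : Integrable f μ) (hg : Integrable g μ)
    (hfg : ∀ᵐ a ∂μ, f a < g a) :
    ∫ a, f a ∂μ < ∫ a, g a ∂μ := by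
  rw [← sub_pos, ← integral_sub hg hf, integral_pos_iff_support_of_nonneg_ae
    (hfg.mono fun a ha => (sub_pos.2 ha).le) (hg.sub hf), pos_iff_ne_zero]
  intro hnull
  obtain ⟨a, hlt, heq⟩ := (hfg.and (measure_eq_zero_iff_ae_notMem.1 hnull)).exists
  simp only [Function.mem_support, ne_eq, not_not, sub_eq_zero] at heq
  exact hlt.ne' heq

theorem integrable_inv_sub_of_notMem_support {μ : Measure ℝ} [IsFiniteMeasure μ] {x : ℝ}
    (hx : x ∉ μ.support) : Integrable (fun t => (x - t)⁻¹) μ := by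
  obtain ⟨r, hr, hball⟩ := Metric.isOpen_iff.1 Measure.isOpen_compl_support x hx
  refine Integrable.of_bound (by fun_prop) r⁻¹ ?_
  filter_upwards [Measure.support_mem_ae] with t ht
  have hrt : r ≤ |x - t| := by
    by_contra! h
    exact hball (by rwa [Metric.mem_ball, Real.dist_eq, abs_sub_comm]) ht
  rw [norm_inv, Real.norm_eq_abs]
  exact inv_anti₀ hr hrt

theorem inv_sub_lt_inv_sub_of_notMem_Icc {x y t : ℝ} (hxy : x < y) (ht : t ∉ Set.Icc x y) :
    (y - t)⁻¹ < (x - t)⁻¹ := by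
  rw [Set.mem_Icc, not_and_or, not_le, not_le] at ht
  rcases ht with htx | hyt
  · exact inv_strictAntiOn (sub_pos.2 htx) (sub_pos.2 (htx.trans hxy)) (by linarith)
  · rw [inv_lt_inv_of_neg (by linarith) (by linarith)]
    linarith

theorem stmt2_general (μ : Measure ℝ) [IsProbabilityMeasure μ]
    (I : Set ℝ) (hI : Convex ℝ I) (hdisj : I ∩ measureSupport μ = ∅) :
    StrictAntiOn (fun x : ℝ => ∫ t, (x - t)⁻¹ ∂μ) I := by
  rw [measureSupport_eq_support] at hdisj
  have hI_support : ∀ x ∈ I, x ∉ μ.support := fun x hx hxμ => hdisj.subset ⟨hx, hxμ⟩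
  intro x hx y hy hxy
  refine integral_lt_integral_of_ae_lt (integrable_inv_sub_of_notMem_support (hI_support y hy))
    (integrable_inv_sub_of_notMem_support (hI_support x hx)) ?_
  filter_upwards [Measure.support_mem_ae] with t ht
  exact inv_sub_lt_inv_sub_of_notMem_Icc hxy fun htI =>
    hI_support t (hI.ordConnected.out hx hy htI) ht

theorem stmt2 (μ : Measure ℝ) [IsProbabilityMeasure μ]
    (hcompact : IsCompact (measureSupport μ))
    (I : Set ℝ) (hI : Convex ℝ I) (hdisj : I ∩ measureSupport μ = ∅) :
    StrictAntiOn (fun x : ℝ => ∫ t, (x - t)⁻¹ ∂μ) I :=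
  stmt2_general μ I hI hdisj
end

section
/- Let η be a compactly supported Borel probability measure on ℝ² with marginals μ and ν, and let z, w ∈ ℂ⁺ and ζ ∈ ℂ satisfy 4·(Im z)·(Im w) > |ζ|². Let N be the 2×2 complex matrix with rows (G_μ(z), −ζ·G_η(z,w)) and (0, G_ν(w)). Then the Hermitian matrix (N − N*)/(2i) is negative definite. -/
open MeasureTheory Matrix Complex
open scoped ComplexOrder

/-- The (one-variable) Cauchy transform of a measure on `ℝ`,
`G_μ(z) = ∫ 1/(z - t) dμ(t)`. -/
noncomputable def cauchyTransform (μ : Measure ℝ) (z : ℂ) : ℂ :=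
  ∫ t, (z - (t : ℂ))⁻¹ ∂μ

/-- The two-variable Cauchy transform of a measure on `ℝ²`,
`G_η(z, w) = ∫ 1/((z - t)(w - s)) dη(t, s)`. -/
noncomputable def cauchyTransform2 (η : Measure (ℝ × ℝ)) (z w : ℂ) : ℂ :=
  ∫ p, ((z - (p.1 : ℂ)) * (w - (p.2 : ℂ)))⁻¹ ∂η

/-- The imaginary part `(M - M^*)/(2i)` of a square complex matrix. -/
noncomputable def matImPart (M : Matrix (Fin 2) (Fin 2) ℂ) : Matrix (Fin 2) (Fin 2) ℂ :=
  (2 * Complex.I)⁻¹ • (M - Mᴴ)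

/-- A Hermitian matrix is negative definite if `⟨Av, v⟩ < 0` for every nonzero vector `v`. -/
def matNegDef (A : Matrix (Fin 2) (Fin 2) ℂ) : Prop :=
  A.IsHermitian ∧ ∀ x : Fin 2 → ℂ, x ≠ 0 → (dotProduct (star x) (A *ᵥ x)).re < 0

/-!
Writing `a = z - t`, `b = w - s`, the matrix is the `η`-average of the kernel
`K(a, b) = [[a⁻¹, -ζ (ab)⁻¹], [0, b⁻¹]]`, so `Im ⟨N x, x⟩` is the average of
`Im ⟨K x, x⟩ ≤ -(Im a) P² - (Im b) Q² + |ζ| P Q` with `P = |x₀|/|a|`, `Q = |x₁|/|b|`.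
Since `Im a = Im z` and `Im b = Im w` for all real `t, s`, the condition `|ζ|² < 4 Im z Im w`
makes `(Im a) P² + (Im b) Q² - |ζ| P Q` positive definite, uniformly in `(t, s)`.
-/

open ComplexConjugate

lemma matImPart_isHermitian (M : Matrix (Fin 2) (Fin 2) ℂ) : (matImPart M).IsHermitian := by
  unfold Matrix.IsHermitian matImPart
  rw [conjTranspose_smul, conjTranspose_sub, conjTranspose_conjTranspose]
  have : star ((2 * Complex.I)⁻¹) = -(2 * Complex.I)⁻¹ := by simp
  rw [this, neg_smul, smul_sub, smul_sub, neg_sub]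

lemma star_dotProduct_conjTranspose_mulVec {R n : Type*} [CommSemiring R] [StarRing R]
    [Fintype n] (M : Matrix n n R) (x : n → R) :
    star x ⬝ᵥ (Mᴴ *ᵥ x) = star (star x ⬝ᵥ (M *ᵥ x)) := by
  rw [star_dotProduct, star_mulVec, conjTranspose_conjTranspose, dotProduct_mulVec]

lemma star_dotProduct_matImPart_mulVec (M : Matrix (Fin 2) (Fin 2) ℂ) (x : Fin 2 → ℂ) :
    star x ⬝ᵥ (matImPart M *ᵥ x) = ((star x ⬝ᵥ (M *ᵥ x)).im : ℂ) := by
  rw [matImPart, smul_mulVec, dotProduct_smul, sub_mulVec, dotProduct_sub,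
    star_dotProduct_conjTranspose_mulVec, im_eq_sub_conj, smul_eq_mul, div_eq_inv_mul]
  rfl

lemma quadratic_pos_of_discrim_neg {a b c p q : ℝ} (ha : 0 < a) (hc : c ^ 2 < 4 * a * b)
    (hpq : p ≠ 0 ∨ q ≠ 0) : 0 < a * p ^ 2 + b * q ^ 2 - c * p * q := by
  rcases eq_or_ne q 0 with rfl | hq
  · have hp : p ≠ 0 := by simpa using hpq
    simpa using (by positivity : 0 < a * p ^ 2)
  · have key : 4 * a * (a * p ^ 2 + b * q ^ 2 - c * p * q)
        = (2 * a * p - c * q) ^ 2 + (4 * a * b - c ^ 2) * q ^ 2 := by ring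
    have : 0 < 4 * a * b - c ^ 2 := by linarith
    refine pos_of_mul_pos_right (a := 4 * a) ?_ (by positivity)
    rw [key]
    positivity

lemma im_conj_mul_self_mul_inv (x a : ℂ) : (conj x * x * a⁻¹).im = -a.im * (‖x‖ / ‖a‖) ^ 2 := by
  rw [conj_mul', ← ofReal_pow, im_ofReal_mul, inv_im, normSq_eq_norm_sq]
  ring

lemma norm_inv_le_inv_im {a : ℂ} (ha : 0 < a.im) : ‖a⁻¹‖ ≤ a.im⁻¹ := by
  rw [norm_inv]
  exact inv_anti₀ ha ((le_abs_self _).trans (abs_im_le_norm a))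

section Average

variable {α : Type*} [MeasurableSpace α] {μ : Measure α}

lemma im_integral_neg [NeZero μ] {f : α → ℂ} (hf : Integrable f μ) (hneg : ∀ a, (f a).im < 0) :
    (∫ a, f a ∂μ).im < 0 := by
  rw [show (∫ a, f a ∂μ).im = ∫ a, (f a).im ∂μ from (integral_im hf).symm, ← neg_pos,
    ← integral_neg, integral_pos_iff_support_of_nonneg (fun a => (neg_pos.2 (hneg a)).le) hf.im.neg]
  suffices Function.support (fun a => -(f a).im) = Set.univ by simp [this, NeZero.ne]
  exact Set.eq_univ_of_forall fun a => (neg_pos.2 (hneg a)).ne'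

variable {n : Type*} [Fintype n] {M : α → Matrix n n ℂ}

lemma integrable_star_dotProduct_mulVec (hM : ∀ i j, Integrable (fun a => M a i j) μ)
    (x : n → ℂ) : Integrable (fun a => star x ⬝ᵥ (M a *ᵥ x)) μ := by
  simp only [dotProduct, mulVec]
  fun_prop

lemma star_dotProduct_integral_mulVec (hM : ∀ i j, Integrable (fun a => M a i j) μ)
    (x : n → ℂ) :
    star x ⬝ᵥ ((fun i j => ∫ a, M a i j ∂μ) *ᵥ x) = ∫ a, star x ⬝ᵥ (M a *ᵥ x) ∂μ := by
  simp only [dotProduct, mulVec, Finset.mul_sum]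
  rw [integral_finsetSum _ fun i _ =>
    integrable_finsetSum _ fun j _ => ((hM i j).mul_const _).const_mul _]
  refine Finset.sum_congr rfl fun i _ => ?_
  rw [integral_finsetSum _ fun j _ => ((hM i j).mul_const _).const_mul _]
  simp only [integral_const_mul, integral_mul_const]

end Average

noncomputable def cauchyKernelMatrix (ζ a b : ℂ) : Matrix (Fin 2) (Fin 2) ℂ :=
  !![a⁻¹, -ζ * (a * b)⁻¹; 0, b⁻¹]

lemma im_star_dotProduct_cauchyKernelMatrix_mulVec_neg {ζ a b : ℂ} (ha : 0 < a.im)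
    (hζ : ‖ζ‖ ^ 2 < 4 * a.im * b.im) {x : Fin 2 → ℂ} (hx : x ≠ 0) :
    (star x ⬝ᵥ (cauchyKernelMatrix ζ a b *ᵥ x)).im < 0 := by
  have expand : star x ⬝ᵥ (cauchyKernelMatrix ζ a b *ᵥ x) = conj (x 0) * x 0 * a⁻¹
      + -ζ * conj (x 0) * x 1 * (a * b)⁻¹ + conj (x 1) * x 1 * b⁻¹ := by
    simp [cauchyKernelMatrix, dotProduct, mulVec, Fin.sum_univ_two]
    ring
  set P := ‖x 0‖ / ‖a‖
  set Q := ‖x 1‖ / ‖b‖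
  have ha0 : a ≠ 0 := fun h => by simp [h] at ha
  have hb0 : b ≠ 0 := fun h => by simp [h] at hζ; nlinarith [norm_nonneg ζ]
  have cross : (-ζ * conj (x 0) * x 1 * (a * b)⁻¹).im ≤ ‖ζ‖ * P * Q :=
    calc _ ≤ ‖-ζ * conj (x 0) * x 1 * (a * b)⁻¹‖ := im_le_norm _
      _ = ‖ζ‖ * P * Q := by simp only [norm_mul, norm_neg, norm_conj, norm_inv]; ring
  have hPQ : P ≠ 0 ∨ Q ≠ 0 := by
    by_contra! h
    simp only [P, Q, div_eq_zero_iff, norm_eq_zero, ha0, hb0, or_false] at h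
    exact hx (funext fun i => by fin_cases i <;> simp [h])
  have := quadratic_pos_of_discrim_neg ha hζ hPQ
  rw [expand, add_im, add_im, im_conj_mul_self_mul_inv, im_conj_mul_self_mul_inv]
  linarith

lemma norm_cauchyKernelMatrix_apply_le (ζ : ℂ) {a b : ℂ} (ha : 0 < a.im) (hb : 0 < b.im)
    (i j : Fin 2) :
    ‖cauchyKernelMatrix ζ a b i j‖ ≤ a.im⁻¹ + ‖ζ‖ * (a.im⁻¹ * b.im⁻¹) + b.im⁻¹ := by
  have hainv := norm_inv_le_inv_im ha
  have hbinv := norm_inv_le_inv_im hb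
  have hcross : ‖-ζ * (a * b)⁻¹‖ ≤ ‖ζ‖ * (a.im⁻¹ * b.im⁻¹) := by
    rw [norm_mul, norm_neg, mul_inv, norm_mul]
    gcongr
  have : 0 ≤ a.im⁻¹ := by positivity
  have : 0 ≤ b.im⁻¹ := by positivity
  have : 0 ≤ ‖ζ‖ * (a.im⁻¹ * b.im⁻¹) := by positivity
  fin_cases i <;> fin_cases j <;> dsimp [cauchyKernelMatrix] <;> linarith [norm_zero (E := ℂ)]

lemma integrable_cauchyKernelMatrix_apply (η : Measure (ℝ × ℝ)) [IsFiniteMeasure η] {z w : ℂ}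
    (hz : 0 < z.im) (hw : 0 < w.im) (ζ : ℂ) (i j : Fin 2) :
    Integrable (fun p => cauchyKernelMatrix ζ (z - p.1) (w - p.2) i j) η := by
  refine .of_bound (by fin_cases i <;> fin_cases j <;> simp [cauchyKernelMatrix] <;> fun_prop)
    (z.im⁻¹ + ‖ζ‖ * (z.im⁻¹ * w.im⁻¹) + w.im⁻¹) (.of_forall fun p => ?_)
  simpa using norm_cauchyKernelMatrix_apply_le ζ (a := z - p.1) (b := w - p.2)
    (by simpa using hz) (by simpa using hw) i j

lemma integral_cauchyKernelMatrix (η : Measure (ℝ × ℝ)) (z w ζ : ℂ) :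
    (fun i j => ∫ p, cauchyKernelMatrix ζ (z - p.1) (w - p.2) i j ∂η)
      = !![cauchyTransform (η.map Prod.fst) z, -ζ * cauchyTransform2 η z w;
           0, cauchyTransform (η.map Prod.snd) w] := by
  ext i j
  fin_cases i <;> fin_cases j <;>
    simp [cauchyKernelMatrix, cauchyTransform, cauchyTransform2, integral_neg, integral_const_mul,
      integral_map, measurable_fst.aemeasurable, measurable_snd.aemeasurable,
      (by fun_prop : Measurable fun t : ℝ => (z - t)⁻¹).aestronglyMeasurable,
      (by fun_prop : Measurable fun t : ℝ => (w - t)⁻¹).aestronglyMeasurable]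

theorem stmt6_general (η : Measure (ℝ × ℝ)) [IsProbabilityMeasure η] (z w ζ : ℂ)
    (hz : 0 < z.im) (hw : 0 < w.im) (hζ : ‖ζ‖ ^ 2 < 4 * z.im * w.im) :
    matNegDef (matImPart
      !![cauchyTransform (η.map Prod.fst) z, -ζ * cauchyTransform2 η z w;
         0, cauchyTransform (η.map Prod.snd) w]) := by
  refine ⟨matImPart_isHermitian _, fun x hx => ?_⟩
  have hK := integrable_cauchyKernelMatrix_apply η hz hw ζ
  rw [star_dotProduct_matImPart_mulVec, ofReal_re, ← integral_cauchyKernelMatrix,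
    star_dotProduct_integral_mulVec hK]
  refine im_integral_neg (integrable_star_dotProduct_mulVec hK x) fun p => ?_
  exact im_star_dotProduct_cauchyKernelMatrix_mulVec_neg (by simpa using hz) (by simpa using hζ) hx

theorem stmt6 (η : Measure (ℝ × ℝ)) [IsProbabilityMeasure η]
    (hcompact : IsCompact (measureSupport η)) (z w ζ : ℂ)
    (hz : 0 < z.im) (hw : 0 < w.im) (hζ : ‖ζ‖ ^ 2 < 4 * z.im * w.im) :
    matNegDef (matImPart
      !![cauchyTransform (η.map Prod.fst) z, -ζ * cauchyTransform2 η z w;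
         0, cauchyTransform (η.map Prod.snd) w]) :=
  stmt6_general η z w ζ hz hw hζ
end

section
/- Let η be a Borel probability measure on ℝ² with marginals μ and ν. Then for all z, w ∈ ℂ⁺: (Im G_μ(z)) · (Im G_ν(w)) ≥ (Im z) · (Im w) · |G_η(z,w)|². (Here Im G_μ(z) and Im G_ν(w) are both nonpositive, so the left-hand side is nonnegative.) -/
open MeasureTheory Complex

/-!
Since `Im (z - t)⁻¹ = -Im z · |z - t|⁻²` for real `t`, both factors on the right are
`-Im z ∫ |z - t|⁻² dη` and `-Im w ∫ |w - s|⁻² dη`, while `|G_η(z, w)|` is at most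
`∫ |z - t|⁻¹ |w - s|⁻¹ dη`. The inequality is therefore Cauchy–Schwarz in `L²(η)` applied to
`|z - t|⁻¹` and `|w - s|⁻¹`, which are bounded by `(Im z)⁻¹` and `(Im w)⁻¹`.
-/

theorem sq_integral_mul_le_integral_sq_mul_integral_sq {α : Type*} [MeasurableSpace α]
    {μ : Measure α} {f g : α → ℝ} (hf : 0 ≤ᵐ[μ] f) (hg : 0 ≤ᵐ[μ] g)
    (hf₂ : MemLp f 2 μ) (hg₂ : MemLp g 2 μ) :
    (∫ a, f a * g a ∂μ) ^ 2 ≤ (∫ a, f a ^ 2 ∂μ) * ∫ a, g a ^ 2 ∂μ := by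
  have holder := integral_mul_le_Lp_mul_Lq_of_nonneg Real.HolderConjugate.two_two hf hg
    (by simpa using hf₂) (by simpa using hg₂)
  simp only [Real.rpow_two, ← Real.sqrt_eq_rpow] at holder
  have hfg : 0 ≤ ∫ a, f a * g a ∂μ :=
    integral_nonneg_of_ae (by filter_upwards [hf, hg] with a ha hb using mul_nonneg ha hb)
  calc (∫ a, f a * g a ∂μ) ^ 2
      ≤ (√(∫ a, f a ^ 2 ∂μ) * √(∫ a, g a ^ 2 ∂μ)) ^ 2 := pow_le_pow_left₀ hfg holder 2
    _ = (∫ a, f a ^ 2 ∂μ) * ∫ a, g a ^ 2 ∂μ := by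
      rw [mul_pow, Real.sq_sqrt (integral_nonneg fun a => sq_nonneg _),
        Real.sq_sqrt (integral_nonneg fun a => sq_nonneg _)]

theorem im_le_norm_sub_ofReal (z : ℂ) (t : ℝ) : z.im ≤ ‖z - t‖ :=
  calc z.im ≤ |(z - t).im| := by simpa using le_abs_self z.im
    _ ≤ ‖z - t‖ := abs_im_le_norm _

theorem norm_sub_ofReal_inv_le {z : ℂ} (hz : 0 < z.im) (t : ℝ) : ‖z - t‖⁻¹ ≤ z.im⁻¹ :=
  inv_anti₀ hz (im_le_norm_sub_ofReal z t)

theorem im_inv_sub_ofReal (z : ℂ) (t : ℝ) : ((z - t)⁻¹).im = -z.im * ‖z - t‖⁻¹ ^ 2 := by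
  rw [inv_im, normSq_eq_norm_sq, sub_im, ofReal_im, sub_zero, inv_pow, div_eq_mul_inv, neg_mul]

theorem integrable_inv_sub_ofReal (μ : Measure ℝ) [IsFiniteMeasure μ] {z : ℂ} (hz : 0 < z.im) :
    Integrable (fun t : ℝ => (z - t)⁻¹) μ :=
  .of_bound (by fun_prop) z.im⁻¹ <| .of_forall fun t => by
    simpa only [norm_inv] using norm_sub_ofReal_inv_le hz t

theorem memLp_inv_norm_sub_ofReal_comp {α : Type*} [MeasurableSpace α] (μ : Measure α)
    [IsFiniteMeasure μ] {φ : α → ℝ} (hφ : Measurable φ) {z : ℂ} (hz : 0 < z.im) (p : ENNReal) :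
    MemLp (fun a => ‖z - φ a‖⁻¹) p μ :=
  .of_bound (by fun_prop) z.im⁻¹ <| .of_forall fun a => by
    simpa only [norm_inv, norm_norm] using norm_sub_ofReal_inv_le hz (φ a)

theorem im_cauchyTransform (μ : Measure ℝ) [IsFiniteMeasure μ] {z : ℂ} (hz : 0 < z.im) :
    (cauchyTransform μ z).im = -z.im * ∫ t, ‖z - t‖⁻¹ ^ 2 ∂μ := by
  rw [cauchyTransform, ← integral_const_mul]
  simp_rw [← im_inv_sub_ofReal]
  exact (integral_im (integrable_inv_sub_ofReal μ hz)).symm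

theorem norm_cauchyTransform2_sq_le (η : Measure (ℝ × ℝ)) [IsFiniteMeasure η] {z w : ℂ}
    (hz : 0 < z.im) (hw : 0 < w.im) :
    ‖cauchyTransform2 η z w‖ ^ 2 ≤
      (∫ p, ‖z - p.1‖⁻¹ ^ 2 ∂η) * ∫ p, ‖w - p.2‖⁻¹ ^ 2 ∂η := by
  have hnorm : ‖cauchyTransform2 η z w‖ ≤ ∫ p, ‖z - p.1‖⁻¹ * ‖w - p.2‖⁻¹ ∂η := by
    simpa only [cauchyTransform2, norm_inv, norm_mul, mul_inv] using
      norm_integral_le_integral_norm (μ := η) fun p => ((z - (p.1 : ℂ)) * (w - (p.2 : ℂ)))⁻¹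
  refine (pow_le_pow_left₀ (norm_nonneg _) hnorm 2).trans ?_
  exact sq_integral_mul_le_integral_sq_mul_integral_sq
    (.of_forall fun _ => inv_nonneg.2 (norm_nonneg _))
    (.of_forall fun _ => inv_nonneg.2 (norm_nonneg _))
    (memLp_inv_norm_sub_ofReal_comp η measurable_fst hz 2)
    (memLp_inv_norm_sub_ofReal_comp η measurable_snd hw 2)

theorem stmt7 (η : Measure (ℝ × ℝ)) [IsProbabilityMeasure η]
    (z w : ℂ) (hz : 0 < z.im) (hw : 0 < w.im) :
    z.im * w.im * ‖cauchyTransform2 η z w‖ ^ 2 ≤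
      (cauchyTransform (η.map Prod.fst) z).im * (cauchyTransform (η.map Prod.snd) w).im := by
  rw [im_cauchyTransform _ hz, im_cauchyTransform _ hw,
    integral_map measurable_fst.aemeasurable (by fun_prop),
    integral_map measurable_snd.aemeasurable (by fun_prop)]
  calc z.im * w.im * ‖cauchyTransform2 η z w‖ ^ 2
      ≤ z.im * w.im * ((∫ p, ‖z - p.1‖⁻¹ ^ 2 ∂η) * ∫ p, ‖w - p.2‖⁻¹ ^ 2 ∂η) := by
        gcongr; exact norm_cauchyTransform2_sq_le η hz hw
    _ = _ := by ring
end

section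
/- Let η and θ be Borel probability measures on ℝ², and let ω_a, ω_b : ℂ⁺ → ℂ⁺ be functions such that G_θ(ω_a(z), ω_b(w)) ≠ 0 for all z, w ∈ ℂ⁺, and such that for all z, w ∈ ℂ⁺ and all ζ ∈ ℂ with 4·(Im z)·(Im w) > |ζ|², the 2×2 matrix with rows (ω_a(z), ζ·G_η(z,w)/G_θ(ω_a(z), ω_b(w))) and (0, ω_b(w)) has positive definite imaginary part. Then for all z, w ∈ ℂ⁺: (Im ω_a(z)) · (Im ω_b(w)) · |G_θ(ω_a(z), ω_b(w))|² ≥ (Im z) · (Im w) · |G_η(z,w)|². -/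
open MeasureTheory Matrix Complex
open scoped ComplexOrder

/-! The imaginary part of `!![a, c; 0, b]` is a Hermitian `2 × 2` matrix of determinant
`Im a * Im b - ‖c‖² / 4`, so its positive definiteness forces `‖c‖² < 4 Im a Im b`.
Applied with `ζ = 2 √t` for every `0 < t < Im z Im w`, this gives
`t ‖G_η(z, w)‖² < Im ω_a(z) Im ω_b(w) ‖G_θ(ω_a(z), ω_b(w))‖²`, and letting `t` tend to
`Im z Im w` yields the claim. -/

lemma det_matImPart_upperTriangular (a b c : ℂ) :
    (matImPart !![a, c; 0, b]).det = ((a.im * b.im - ‖c‖ ^ 2 / 4 : ℝ) : ℂ) := by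
  rw [Matrix.det_fin_two]
  apply Complex.ext <;> simp [matImPart, Complex.sq_norm, Complex.normSq_apply] <;> ring

lemma norm_sq_lt_of_posDef_matImPart {a b c : ℂ} (h : (matImPart !![a, c; 0, b]).PosDef) :
    ‖c‖ ^ 2 < 4 * a.im * b.im := by
  have hdet := h.det_pos
  rw [det_matImPart_upperTriangular, Complex.zero_lt_real] at hdet
  linarith

lemma mul_le_of_forall_lt_mul_le {A B x : ℝ} (hA : 0 < A)
    (h : ∀ t, 0 < t → t < A → t * x ≤ B) : A * x ≤ B :=
  le_of_tendsto (((continuous_mul_const x).tendsto A).mono_left nhdsWithin_le_nhds)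
    (Filter.mem_of_superset (Ioo_mem_nhdsLT hA) fun t ht => h t ht.1 ht.2)

theorem stmt8_general (η θ : Measure (ℝ × ℝ))
    (ωa ωb : ℂ → ℂ)
    (hne : ∀ z w : ℂ, 0 < z.im → 0 < w.im → cauchyTransform2 θ (ωa z) (ωb w) ≠ 0)
    (hPD : ∀ z w : ℂ, 0 < z.im → 0 < w.im → ∀ ζ : ℂ, ‖ζ‖ ^ 2 < 4 * z.im * w.im →
      (matImPart !![ωa z, ζ * cauchyTransform2 η z w / cauchyTransform2 θ (ωa z) (ωb w);
                    0, ωb w]).PosDef)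
    (z w : ℂ) (hz : 0 < z.im) (hw : 0 < w.im) :
    z.im * w.im * ‖cauchyTransform2 η z w‖ ^ 2 ≤
      (ωa z).im * (ωb w).im * ‖cauchyTransform2 θ (ωa z) (ωb w)‖ ^ 2 := by
  have hθ : 0 < ‖cauchyTransform2 θ (ωa z) (ωb w)‖ ^ 2 := pow_pos (norm_pos_iff.2 (hne z w hz hw)) 2
  refine mul_le_of_forall_lt_mul_le (mul_pos hz hw) fun t ht htA => ?_
  have hζ : ‖((2 * √t : ℝ) : ℂ)‖ ^ 2 = 4 * t := by
    rw [Complex.norm_real, Real.norm_eq_abs, sq_abs, mul_pow, Real.sq_sqrt ht.le]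
    norm_num
  have hc := norm_sq_lt_of_posDef_matImPart (hPD z w hz hw _ (by rw [hζ]; linarith))
  rw [norm_div, norm_mul, div_pow, mul_pow, hζ, div_lt_iff₀ hθ] at hc
  linarith

theorem stmt8 (η θ : Measure (ℝ × ℝ)) [IsProbabilityMeasure η] [IsProbabilityMeasure θ]
    (ωa ωb : ℂ → ℂ)
    (hωa : ∀ z : ℂ, 0 < z.im → 0 < (ωa z).im)
    (hωb : ∀ w : ℂ, 0 < w.im → 0 < (ωb w).im)
    (hne : ∀ z w : ℂ, 0 < z.im → 0 < w.im → cauchyTransform2 θ (ωa z) (ωb w) ≠ 0)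
    (hPD : ∀ z w : ℂ, 0 < z.im → 0 < w.im → ∀ ζ : ℂ, ‖ζ‖ ^ 2 < 4 * z.im * w.im →
      (matImPart !![ωa z, ζ * cauchyTransform2 η z w / cauchyTransform2 θ (ωa z) (ωb w);
                    0, ωb w]).PosDef)
    (z w : ℂ) (hz : 0 < z.im) (hw : 0 < w.im) :
    z.im * w.im * ‖cauchyTransform2 η z w‖ ^ 2 ≤
      (ωa z).im * (ωb w).im * ‖cauchyTransform2 θ (ωa z) (ωb w)‖ ^ 2 :=
  stmt8_general η θ ωa ωb hne hPD z w hz hw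
end

section
/- Let η be a finite Borel measure on ℝ², let (ξ, ζ) ∈ ℝ², and let {z_n}, {w_n} be sequences in ℂ⁺ with z_n → ξ and w_n → ζ, converging nontangentially: there is a constant C > 0 such that |Re z_n − ξ| ≤ C·Im z_n and |Re w_n − ζ| ≤ C·Im w_n for all n. Then lim_{n→∞} (z_n − ξ)(w_n − ζ)·G_η(z_n, w_n) = η({(ξ, ζ)}). -/
/-!
In nontangential approach `|z - ξ|` is at most `√(C² + 1) · Im z`, while `Im z ≤ |z - t|` for every
real `t`. Hence the kernels `(z - ξ)/(z - t)` are bounded by `√(C² + 1)` and converge to the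
indicator of `t = ξ`. Writing `(z - ξ)(w - ζ) G_η(z, w)` as the integral of the product of two such
kernels, dominated convergence gives `η {(ξ, ζ)}`.
-/

open MeasureTheory Complex Filter Topology

lemma sub_mul_sub_mul_cauchyTransform2 (η : Measure (ℝ × ℝ)) (z w a b : ℂ) :
    (z - a) * (w - b) * cauchyTransform2 η z w =
      ∫ p, (z - a) / (z - p.1) * ((w - b) / (w - p.2)) ∂η := by
  simp only [cauchyTransform2, ← integral_const_mul, div_eq_mul_inv, mul_inv, mul_mul_mul_comm]

namespace Complex

lemma norm_sub_ofReal_le_sqrt_mul_im {z : ℂ} {ξ C : ℝ} (hz : 0 ≤ z.im)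
    (hNT : |z.re - ξ| ≤ C * z.im) : ‖z - ξ‖ ≤ √(C ^ 2 + 1) * z.im := by
  rw [norm_def, normSq_apply, ← Real.sqrt_sq hz, ← Real.sqrt_mul (by positivity)]
  apply Real.sqrt_le_sqrt
  have hsq : (z.re - ξ) ^ 2 ≤ (C * z.im) ^ 2 := sq_le_sq' (abs_le.1 hNT).1 (abs_le.1 hNT).2
  simp only [sub_re, ofReal_re, sub_im, ofReal_im, sub_zero]
  nlinarith

lemma im_le_norm_sub_ofReal (z : ℂ) (t : ℝ) : z.im ≤ ‖z - t‖ := by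
  simpa using (le_abs_self (z - t).im).trans (abs_im_le_norm (z - t))

lemma norm_sub_div_sub_ofReal_le {z : ℂ} {ξ C : ℝ} (hz : 0 ≤ z.im)
    (hNT : |z.re - ξ| ≤ C * z.im) (t : ℝ) : ‖(z - ξ) / (z - t)‖ ≤ √(C ^ 2 + 1) := by
  rw [norm_div]
  refine div_le_of_le_mul₀ (norm_nonneg _) (Real.sqrt_nonneg _) ?_
  calc ‖z - ξ‖ ≤ √(C ^ 2 + 1) * z.im := norm_sub_ofReal_le_sqrt_mul_im hz hNT
    _ ≤ √(C ^ 2 + 1) * ‖z - t‖ := by gcongr; exact im_le_norm_sub_ofReal z t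

end Complex

lemma tendsto_sub_div_sub {𝕜 ι : Type*} [NormedField 𝕜] [DecidableEq 𝕜] {l : Filter ι}
    {z : ι → 𝕜} {a : 𝕜}
    (hz : Tendsto z l (𝓝 a)) (hza : ∀ᶠ i in l, z i ≠ a) (t : 𝕜) :
    Tendsto (fun i => (z i - a) / (z i - t)) l (𝓝 (if t = a then 1 else 0)) := by
  by_cases hta : t = a
  · rw [if_pos hta, hta]
    refine tendsto_const_nhds.congr' ?_
    filter_upwards [hza] with i hi
    exact (div_self (sub_ne_zero.2 hi)).symm
  · rw [if_neg hta]
    simpa [Pi.div_def] using (hz.sub_const a).div (hz.sub_const t) (sub_ne_zero.2 (Ne.symm hta))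

theorem stmt9_general (η : Measure (ℝ × ℝ)) [IsFiniteMeasure η] (ξ ζ : ℝ)
    (z w : ℕ → ℂ)
    (hz : ∀ n, 0 < (z n).im) (hw : ∀ n, 0 < (w n).im)
    (hzlim : Tendsto z atTop (𝓝 (ξ : ℂ))) (hwlim : Tendsto w atTop (𝓝 (ζ : ℂ)))
    (C : ℝ)
    (hzNT : ∀ n, |(z n).re - ξ| ≤ C * (z n).im)
    (hwNT : ∀ n, |(w n).re - ζ| ≤ C * (w n).im) :
    Tendsto (fun n => (z n - (ξ : ℂ)) * (w n - (ζ : ℂ)) * cauchyTransform2 η (z n) (w n))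
      atTop (𝓝 (((η {(ξ, ζ)}).toReal : ℂ))) := by
  have hlim : ((η {(ξ, ζ)}).toReal : ℂ) =
      ∫ p, ({(ξ, ζ)} : Set (ℝ × ℝ)).indicator 1 p ∂η := by
    rw [show (1 : ℝ × ℝ → ℂ) = fun _ => 1 from rfl,
      integral_indicator_const _ (measurableSet_singleton _)]
    simp [measureReal_def]
  simp only [sub_mul_sub_mul_cauchyTransform2, hlim]
  refine tendsto_integral_of_dominated_convergence (fun _ => √(C ^ 2 + 1) ^ 2)
    (fun n => by fun_prop) (integrable_const _) (fun n => ?_) ?_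
  · filter_upwards with p
    rw [norm_mul, sq]
    gcongr
    exacts [norm_sub_div_sub_ofReal_le (hz n).le (hzNT n) p.1,
      norm_sub_div_sub_ofReal_le (hw n).le (hwNT n) p.2]
  · filter_upwards with p
    have hind : ({(ξ, ζ)} : Set (ℝ × ℝ)).indicator (1 : ℝ × ℝ → ℂ) p =
        (if (p.1 : ℂ) = ξ then 1 else 0) * (if (p.2 : ℂ) = ζ then 1 else 0) := by
      simp only [Set.indicator_apply, Set.mem_singleton_iff, Prod.ext_iff, Pi.one_apply, ofReal_inj,
        ite_zero_mul_ite_zero, mul_one]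
    rw [hind]
    have ne_of_im_pos {u : ℕ → ℂ} (hu : ∀ n, 0 < (u n).im) (x : ℝ) : ∀ᶠ n in atTop, u n ≠ x :=
      Eventually.of_forall fun n h => (hu n).ne' (by simp [h])
    exact (tendsto_sub_div_sub hzlim (ne_of_im_pos hz ξ) p.1).mul
      (tendsto_sub_div_sub hwlim (ne_of_im_pos hw ζ) p.2)

theorem stmt9 (η : Measure (ℝ × ℝ)) [IsFiniteMeasure η] (ξ ζ : ℝ)
    (z w : ℕ → ℂ)
    (hz : ∀ n, 0 < (z n).im) (hw : ∀ n, 0 < (w n).im)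
    (hzlim : Tendsto z atTop (𝓝 (ξ : ℂ))) (hwlim : Tendsto w atTop (𝓝 (ζ : ℂ)))
    (C : ℝ) (hC : 0 < C)
    (hzNT : ∀ n, |(z n).re - ξ| ≤ C * (z n).im)
    (hwNT : ∀ n, |(w n).re - ζ| ≤ C * (w n).im) :
    Tendsto (fun n => (z n - (ξ : ℂ)) * (w n - (ζ : ℂ)) * cauchyTransform2 η (z n) (w n))
      atTop (𝓝 (((η {(ξ, ζ)}).toReal : ℂ))) :=
  stmt9_general η ξ ζ z w hz hw hzlim hwlim C hzNT hwNT
end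

section
/- Let η be a Borel probability measure on ℝ² with marginals μ and ν, let x, u ∈ ℝ, and let α > 1/2. Suppose that (y₁·y₂)^α · |G_η(x + i·y₁, u + i·y₂)| → +∞ as (y₁, y₂) → (0, 0) with y₁, y₂ > 0. Then there exists t ∈ (0, 2α − 1] such that both sets {y^t · |Im G_μ(x + i·y)| : y > 0} and {y^t · |Im G_ν(u + i·y)| : y > 0} are unbounded. -/
/-!
By Cauchy–Schwarz, `|G_η(z, w)|² ≤ (∫ |z - t|⁻² dμ) (∫ |w - s|⁻² dν)`, and
`∫ |z - t|⁻² dμ = |Im G_μ(z)| / Im z`. Hence `((y₁ y₂)^α |G_η|)² ≤ a(y₁) b(y₂)` with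
`a(y) = y^(2α-1) |Im G_μ(x + iy)|` and `b` likewise for `ν`. Take `t = α - 1/2 > 0`. If
`y^t |Im G_ν(u + iy)| ≤ M`, then `b(y) ≤ M y^t → 0`; fixing a small `y₁` and letting `y₂ → 0`
keeps the left-hand side below `1`, contradicting the blow-up. The case of `μ` is symmetric.
-/

open MeasureTheory Complex Filter Topology

open Set

lemma not_tendsto_atTop_of_sq_le_mul {α β : Type*} {la : Filter α} {lb : Filter β}
    [la.NeBot] [lb.NeBot] {P : α × β → ℝ} {a : α → ℝ} {b : β → ℝ}
    (hP : ∀ᶠ p in la ×ˢ lb, P p ^ 2 ≤ a p.1 * b p.2) (hb : Tendsto b lb (𝓝 0)) :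
    ¬ Tendsto P (la ×ˢ lb) atTop := by
  intro hlim
  obtain ⟨x, hx⟩ := ((hlim.eventually_ge_atTop 1).and hP).curry.exists
  have hsmall : ∀ᶠ y in lb, a x * b y < 1 :=
    (hb.const_mul (a x)).eventually (gt_mem_nhds (by simp))
  obtain ⟨y, ⟨hPge, hPle⟩, hlt⟩ := (hx.and hsmall).exists
  nlinarith

lemma tendsto_rpow_mul_of_bddAbove {r t : ℝ} (htr : t < r) {g : ℝ → ℝ} (hg : ∀ y, 0 ≤ g y)
    (hbdd : BddAbove ((fun y => y ^ t * g y) '' Ioi 0)) :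
    Tendsto (fun y => y ^ r * g y) (𝓝[>] 0) (𝓝 0) := by
  obtain ⟨M, hM⟩ := hbdd
  have hdecay : Tendsto (fun y : ℝ => y ^ (r - t) * M) (𝓝 0) (𝓝 0) := by
    have := (Real.continuousAt_rpow_const 0 (r - t) (Or.inr (sub_pos.2 htr).le)).tendsto
      |>.mul_const M
    rwa [Real.zero_rpow (sub_pos.2 htr).ne', zero_mul] at this
  refine tendsto_of_tendsto_of_tendsto_of_le_of_le' tendsto_const_nhds
    (hdecay.mono_left nhdsWithin_le_nhds)
    (eventually_nhdsWithin_of_forall fun y (hy : 0 < y) => by have := hg y; positivity)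
    (eventually_nhdsWithin_of_forall fun y (hy : 0 < y) => ?_)
  calc y ^ r * g y = y ^ (r - t) * (y ^ t * g y) := by
        rw [← mul_assoc, ← Real.rpow_add hy, sub_add_cancel]
    _ ≤ y ^ (r - t) * M := by gcongr; exact hM (mem_image_of_mem _ hy)

lemma sq_integral_norm_mul_le {Ω E : Type*} [MeasurableSpace Ω] {μ : Measure Ω}
    [NormedAddCommGroup E] {f g : Ω → E} (hf : MemLp f 2 μ) (hg : MemLp g 2 μ) :
    (∫ ω, ‖f ω‖ * ‖g ω‖ ∂μ) ^ 2 ≤ (∫ ω, ‖f ω‖ ^ 2 ∂μ) * ∫ ω, ‖g ω‖ ^ 2 ∂μ := by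
  have hCS := integral_mul_norm_le_Lp_mul_Lq (μ := μ) (f := f) (g := g)
    Real.HolderConjugate.two_two (by rwa [ENNReal.ofReal_ofNat]) (by rwa [ENNReal.ofReal_ofNat])
  simp only [Real.rpow_two, ← Real.sqrt_eq_rpow] at hCS
  calc (∫ ω, ‖f ω‖ * ‖g ω‖ ∂μ) ^ 2
      ≤ (√(∫ ω, ‖f ω‖ ^ 2 ∂μ) * √(∫ ω, ‖g ω‖ ^ 2 ∂μ)) ^ 2 :=
        pow_le_pow_left₀ (integral_nonneg fun _ => by positivity) hCS 2
    _ = _ := by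
        rw [mul_pow, Real.sq_sqrt (integral_nonneg fun _ => by positivity),
          Real.sq_sqrt (integral_nonneg fun _ => by positivity)]

lemma norm_inv_sub_ofReal_le {z : ℂ} (hz : 0 < z.im) (t : ℝ) : ‖(z - t)⁻¹‖ ≤ z.im⁻¹ := by
  rw [norm_inv]
  refine inv_anti₀ hz ((le_abs_self _).trans ?_)
  simpa using abs_im_le_norm (z - t)

lemma continuous_inv_sub_ofReal {z : ℂ} (hz : 0 < z.im) : Continuous fun t : ℝ => (z - t)⁻¹ :=
  (continuous_const.sub continuous_ofReal).inv₀ fun t h =>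
    hz.ne' (by simpa using congrArg Complex.im h)

lemma memLp_inv_sub_ofReal {z : ℂ} (hz : 0 < z.im) {Ω : Type*} [MeasurableSpace Ω]
    (μ : Measure Ω) [IsFiniteMeasure μ] {f : Ω → ℝ} (hf : Measurable f) (p : ENNReal) :
    MemLp (fun ω => (z - f ω)⁻¹) p μ :=
  MemLp.of_bound ((continuous_inv_sub_ofReal hz).measurable.comp hf).aestronglyMeasurable z.im⁻¹
    (ae_of_all _ fun ω => norm_inv_sub_ofReal_le hz (f ω))

lemma integral_sq_norm_inv_sub_ofReal {z : ℂ} (hz : 0 < z.im) (μ : Measure ℝ)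
    [IsFiniteMeasure μ] :
    ∫ t, ‖(z - t)⁻¹‖ ^ 2 ∂μ = |(cauchyTransform μ z).im| / z.im := by
  have him_inv (t : ℝ) : ((z - t)⁻¹).im = -(z.im * ‖(z - t)⁻¹‖ ^ 2) := by
    rw [inv_im, norm_inv, inv_pow, Complex.sq_norm, sub_im, ofReal_im, sub_zero]
    ring
  have him : (cauchyTransform μ z).im = -(z.im * ∫ t, ‖(z - t)⁻¹‖ ^ 2 ∂μ) := by
    have hint := memLp_one_iff_integrable.1 (memLp_inv_sub_ofReal hz μ measurable_id' 1)
    calc (cauchyTransform μ z).im = ∫ t, ((z - t)⁻¹).im ∂μ := (integral_im hint).symm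
      _ = _ := by simp only [him_inv, integral_neg, integral_const_mul]
  rw [him, abs_neg, abs_of_nonneg (by positivity), mul_div_cancel_left₀ _ hz.ne']

lemma sq_norm_cauchyTransform2_le (η : Measure (ℝ × ℝ)) [IsFiniteMeasure η] {z w : ℂ}
    (hz : 0 < z.im) (hw : 0 < w.im) :
    ‖cauchyTransform2 η z w‖ ^ 2 ≤
      |(cauchyTransform (η.map Prod.fst) z).im| / z.im *
        (|(cauchyTransform (η.map Prod.snd) w).im| / w.im) := by
  have hmap {f : ℝ × ℝ → ℝ} (hf : Measurable f) {v : ℂ} (hv : 0 < v.im) :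
      ∫ p, ‖(v - f p)⁻¹‖ ^ 2 ∂η = ∫ t, ‖(v - t)⁻¹‖ ^ 2 ∂(η.map f) :=
    (integral_map hf.aemeasurable
      ((continuous_inv_sub_ofReal hv).norm.pow 2).aestronglyMeasurable).symm
  rw [← integral_sq_norm_inv_sub_ofReal hz, ← integral_sq_norm_inv_sub_ofReal hw,
    ← hmap measurable_fst hz, ← hmap measurable_snd hw]
  calc ‖cauchyTransform2 η z w‖ ^ 2
      ≤ (∫ p, ‖(z - p.1)⁻¹‖ * ‖(w - p.2)⁻¹‖ ∂η) ^ 2 := by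
        refine pow_le_pow_left₀ (norm_nonneg _) ((norm_integral_le_integral_norm _).trans_eq ?_) 2
        simp only [mul_inv, norm_mul]
    _ ≤ _ := sq_integral_norm_mul_le (memLp_inv_sub_ofReal hz η measurable_fst 2)
        (memLp_inv_sub_ofReal hw η measurable_snd 2)

lemma sq_rpow_mul_norm_cauchyTransform2_le (η : Measure (ℝ × ℝ)) [IsFiniteMeasure η]
    (x u α : ℝ) {y₁ y₂ : ℝ} (hy₁ : 0 < y₁) (hy₂ : 0 < y₂) :
    ((y₁ * y₂) ^ α * ‖cauchyTransform2 η (x + y₁ * I) (u + y₂ * I)‖) ^ 2 ≤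
      y₁ ^ (2 * α - 1) * |(cauchyTransform (η.map Prod.fst) (x + y₁ * I)).im| *
        (y₂ ^ (2 * α - 1) * |(cauchyTransform (η.map Prod.snd) (u + y₂ * I)).im|) := by
  have hG := sq_norm_cauchyTransform2_le η (z := x + y₁ * I) (w := u + y₂ * I)
    (by simpa using hy₁) (by simpa using hy₂)
  simp only [add_im, ofReal_im, mul_im, ofReal_re, I_im, I_re, mul_one, mul_zero, zero_add,
    add_zero] at hG
  have hpow : ((y₁ * y₂) ^ α) ^ 2 = y₁ ^ (2 * α) * y₂ ^ (2 * α) := by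
    rw [Real.mul_rpow hy₁.le hy₂.le, mul_pow, ← Real.rpow_natCast, ← Real.rpow_natCast,
      ← Real.rpow_mul hy₁.le, ← Real.rpow_mul hy₂.le]
    push_cast
    ring_nf
  rw [mul_pow, hpow, Real.rpow_sub_one hy₁.ne', Real.rpow_sub_one hy₂.ne']
  calc y₁ ^ (2 * α) * y₂ ^ (2 * α) * ‖cauchyTransform2 η (x + y₁ * I) (u + y₂ * I)‖ ^ 2
      ≤ y₁ ^ (2 * α) * y₂ ^ (2 * α) *
          (|(cauchyTransform (η.map Prod.fst) (x + y₁ * I)).im| / y₁ *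
            (|(cauchyTransform (η.map Prod.snd) (u + y₂ * I)).im| / y₂)) := by gcongr
    _ = _ := by ring

theorem stmt11 (η : Measure (ℝ × ℝ)) [IsProbabilityMeasure η]
    (x u α : ℝ) (hα : 1 / 2 < α)
    (hlim : Tendsto
      (fun p : ℝ × ℝ => (p.1 * p.2) ^ α *
        ‖cauchyTransform2 η ((x : ℂ) + (p.1 : ℂ) * Complex.I)
          ((u : ℂ) + (p.2 : ℂ) * Complex.I)‖)
      (𝓝[Set.Ioi 0 ×ˢ Set.Ioi 0] (0, 0)) atTop) :
    ∃ t ∈ Set.Ioc (0 : ℝ) (2 * α - 1),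
      ¬ BddAbove ((fun y : ℝ =>
          y ^ t * |(cauchyTransform (η.map Prod.fst) ((x : ℂ) + (y : ℂ) * Complex.I)).im|) ''
          Set.Ioi 0) ∧
      ¬ BddAbove ((fun y : ℝ =>
          y ^ t * |(cauchyTransform (η.map Prod.snd) ((u : ℂ) + (y : ℂ) * Complex.I)).im|) ''
          Set.Ioi 0) := by
  rw [nhdsWithin_prod_eq] at hlim
  let a (y : ℝ) := y ^ (2 * α - 1) * |(cauchyTransform (η.map Prod.fst) (x + y * I)).im|
  let b (y : ℝ) := y ^ (2 * α - 1) * |(cauchyTransform (η.map Prod.snd) (u + y * I)).im|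
  have hbound : ∀ᶠ p : ℝ × ℝ in 𝓝[>] 0 ×ˢ 𝓝[>] 0,
      ((p.1 * p.2) ^ α * ‖cauchyTransform2 η (x + p.1 * I) (u + p.2 * I)‖) ^ 2 ≤ a p.1 * b p.2 :=
    eventually_of_mem (prod_mem_prod self_mem_nhdsWithin self_mem_nhdsWithin) fun p hp =>
      sq_rpow_mul_norm_cauchyTransform2_le η x u α hp.1 hp.2
  have hexp : α - 1 / 2 < 2 * α - 1 := by linarith
  refine ⟨α - 1 / 2, ⟨by linarith, by linarith⟩, fun hμ => ?_, fun hν => ?_⟩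
  · have ha : Tendsto a (𝓝[>] 0) (𝓝 0) :=
      tendsto_rpow_mul_of_bddAbove hexp (fun _ => abs_nonneg _) hμ
    refine not_tendsto_atTop_of_sq_le_mul (a := b) ?_ ha (hlim.comp tendsto_prod_swap)
    exact (eventually_swap_iff.1 hbound).mono fun p hp => hp.trans_eq (mul_comm _ _)
  · have hb : Tendsto b (𝓝[>] 0) (𝓝 0) :=
      tendsto_rpow_mul_of_bddAbove hexp (fun _ => abs_nonneg _) hν
    exact not_tendsto_atTop_of_sq_le_mul hbound hb hlim
end

section
/- Let t > 1, and let η, η_t be Borel probability measures on ℝ², with marginals μ, ν of η and μ_t, ν_t of η_t. Let ξ, ζ ∈ ℝ with η_t({(ξ,ζ)}) > 0 and μ({ξ/t}) > 0, ν({ζ/t}) > 0. Let ω₁, ω₂ : ℂ⁺ → ℂ⁺ be functions such that: (i) μ_t({ξ}) = t·μ({ξ/t}) + 1 − t > 0 and ν_t({ζ}) = t·ν({ζ/t}) + 1 − t > 0; (ii) lim_{y↓0} (ω₁(ξ + iy) − ξ/t)/(iy) = μ({ξ/t})/(t·μ({ξ/t}) + 1 − t) and lim_{y↓0} (ω₂(ζ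 + iy) − ζ/t)/(iy) = ν({ζ/t})/(t·ν({ζ/t}) + 1 − t) (limits in ℂ); (iii) for all sufficiently small y > 0, G_{η_t}(ξ+iy, ζ+iy) ≠ 0, G_η(ω₁(ξ+iy), ω₂(ζ+iy)) ≠ 0, and 1/G_{η_t}(ξ+iy, ζ+iy) = t/G_η(ω₁(ξ+iy), ω₂(ζ+iy)) + (1 − t)/(G_μ(ω₁(ξ+iy))·G_ν(ω₂(ζ+iy))), where moreover G_μ(ω₁(ξ+iy)) = G_{μ_t}(ξ+iy) and G_ν(ω₂(ζ+iy)) = G_{ν_t}(ζ+iy); (iv) for all z, w ∈ ℂ⁺: (Im ω₁(z))·(Im ω₂(w))·|G_η(ω₁(z), ω₂(w))|² ≥ (Im z)·(Im w)·|G_{η_t}(z,w)|². Then η({(ξ/t, ζ/t)}) > 0 and μ_t({ξ})·ν_t({ζ})/η_t({(ξ,ζ)}) = t·μ({ξ/t})·ν({ζ/t})/η({(ξ/t, ζ/t)}) + 1 − t. -/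
/-!
Along a path `z → c` that stays in a Stolz angle, `(z - c) / (z - u)` is bounded and tends to the
indicator of `u = c`, so by dominated convergence `(z - c) G_μ(z) → μ{c}` and
`(z - c)(w - d) G_η(z, w) → η{(c, d)}`. The vertical paths `ξ + iy`, `ζ + iy` are of this kind,
and so are their images `ω₁(ξ + iy)`, `ω₂(ζ + iy)`, which by (ii) approach `ξ / t`, `ζ / t` with
positive angular derivatives `α = μ{ξ/t} / μ_t{ξ}` and `β = ν{ζ/t} / ν_t{ζ}`. Multiplying (iv) by
`y⁴` and letting `y ↓ 0` gives `α² β² η_t{(ξ, ζ)}² ≤ α β η{(ξ/t, ζ/t)}²`, so the atom of `η` is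
positive; multiplying (iii) by `(iy)⁻²` and letting `y ↓ 0` gives
`1 / η_t{(ξ, ζ)} = t α β / η{(ξ/t, ζ/t)} + (1 - t) / (μ_t{ξ} ν_t{ζ})`.
-/

open MeasureTheory Complex Filter Topology

lemma integral_complex_indicator_one {X : Type*} [MeasurableSpace X] {μ : Measure X} {s : Set X}
    (hs : MeasurableSet s) : ∫ x, s.indicator (1 : X → ℂ) x ∂μ = ((μ s).toReal : ℂ) := by
  simp [Pi.one_def, integral_indicator_const _ hs, Measure.real]

lemma sub_ofReal_ne_zero_of_im_pos {z : ℂ} (hz : 0 < z.im) (u : ℝ) : z - u ≠ 0 := by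
  intro h
  have := congrArg Complex.im h
  simp only [sub_im, ofReal_im, sub_zero, zero_im] at this
  exact hz.ne' this

lemma norm_sub_div_sub_le {z : ℂ} (hz : 0 < z.im) {c C : ℝ} (h : ‖z - c‖ ≤ C * z.im) (u : ℝ) :
    ‖(z - c) / (z - u)‖ ≤ C := by
  have him : z.im ≤ ‖z - u‖ := by
    simpa using Complex.abs_im_le_norm (z - u) |>.trans' (le_abs_self _)
  rw [norm_div, div_le_iff₀ (hz.trans_le him)]
  have : 0 ≤ C := nonneg_of_mul_nonneg_left ((norm_nonneg _).trans h) hz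
  nlinarith

def TendstoNontangentially {α : Type*} (z : α → ℂ) (l : Filter α) (c : ℝ) : Prop :=
  Tendsto z l (𝓝 c) ∧ ∃ C : ℝ, ∀ᶠ y in l, 0 < (z y).im ∧ ‖z y - c‖ ≤ C * (z y).im

namespace TendstoNontangentially

variable {α : Type*} {l : Filter α} {z w : α → ℂ} {c d : ℝ}

lemma eventually_im_pos (hz : TendstoNontangentially z l c) : ∀ᶠ y in l, 0 < (z y).im := by
  obtain ⟨C, hC⟩ := hz.2
  exact hC.mono fun _ h => h.1

lemma eventually_norm_sub_div_sub_le (hz : TendstoNontangentially z l c) :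
    ∃ C : ℝ, ∀ᶠ y in l, ∀ u : ℝ, ‖(z y - c) / (z y - u)‖ ≤ C := by
  obtain ⟨C, hC⟩ := hz.2
  exact ⟨C, hC.mono fun _ h => norm_sub_div_sub_le h.1 h.2⟩

lemma tendsto_sub_div_sub (hz : TendstoNontangentially z l c) (u : ℝ) :
    Tendsto (fun y => (z y - c) / (z y - u)) l (𝓝 (({c} : Set ℝ).indicator 1 u)) := by
  by_cases h : u = c
  · subst h
    simp only [Set.indicator_of_mem (Set.mem_singleton u), Pi.one_apply]
    refine tendsto_const_nhds.congr' ?_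
    filter_upwards [hz.eventually_im_pos] with y hy
    exact (div_self (sub_ofReal_ne_zero_of_im_pos hy u)).symm
  · have hcu : (c : ℂ) - u ≠ 0 := sub_ne_zero.2 (by exact_mod_cast Ne.symm h)
    rw [Set.indicator_of_notMem (Set.mem_singleton_iff.not.2 h)]
    have := (hz.1.sub_const (c : ℂ)).div (hz.1.sub_const (u : ℂ)) hcu
    rwa [sub_self, zero_div] at this

variable [l.IsCountablyGenerated]

lemma tendsto_mul_cauchyTransform (hz : TendstoNontangentially z l c) (μ : Measure ℝ)
    [IsFiniteMeasure μ] :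
    Tendsto (fun y => (z y - c) * cauchyTransform μ (z y)) l (𝓝 ((μ {c}).toReal : ℂ)) := by
  obtain ⟨C, hC⟩ := hz.eventually_norm_sub_div_sub_le
  have hlim : Tendsto (fun y => ∫ u, (z y - c) / (z y - u) ∂μ) l
      (𝓝 (∫ u, ({c} : Set ℝ).indicator 1 u ∂μ)) :=
    tendsto_integral_filter_of_dominated_convergence (fun _ => C)
      (.of_forall fun y => (by fun_prop : Measurable _).aestronglyMeasurable)
      (hC.mono fun y h => .of_forall (h ·))
      (integrable_const C) (.of_forall hz.tendsto_sub_div_sub)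
  rw [integral_complex_indicator_one (measurableSet_singleton c)] at hlim
  simpa only [cauchyTransform, div_eq_mul_inv, integral_const_mul] using hlim

lemma tendsto_mul_mul_cauchyTransform2 (hz : TendstoNontangentially z l c)
    (hw : TendstoNontangentially w l d) (η : Measure (ℝ × ℝ)) [IsFiniteMeasure η] :
    Tendsto (fun y => (z y - c) * (w y - d) * cauchyTransform2 η (z y) (w y)) l
      (𝓝 ((η {(c, d)}).toReal : ℂ)) := by
  obtain ⟨C, hC⟩ := hz.eventually_norm_sub_div_sub_le
  obtain ⟨D, hD⟩ := hw.eventually_norm_sub_div_sub_le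
  have hlim : Tendsto
      (fun y => ∫ p : ℝ × ℝ, (z y - c) / (z y - p.1) * ((w y - d) / (w y - p.2)) ∂η) l
      (𝓝 (∫ p, (({c} : Set ℝ) ×ˢ ({d} : Set ℝ)).indicator 1 p ∂η)) := by
    refine tendsto_integral_filter_of_dominated_convergence (fun _ => C * D)
      (.of_forall fun y => (by fun_prop : Measurable _).aestronglyMeasurable) ?_
      (integrable_const _) (.of_forall fun p => ?_)
    · filter_upwards [hC, hD] with y hCy hDy
      refine .of_forall fun p => ?_
      rw [norm_mul]
      exact mul_le_mul (hCy p.1) (hDy p.2) (norm_nonneg _) ((norm_nonneg _).trans (hCy p.1))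
    · rw [← Prod.mk.eta (p := p), Set.indicator_prod_one]
      exact (hz.tendsto_sub_div_sub p.1).mul (hw.tendsto_sub_div_sub p.2)
  have hG : ∀ y, ∫ p : ℝ × ℝ, (z y - c) / (z y - p.1) * ((w y - d) / (w y - p.2)) ∂η =
      (z y - c) * (w y - d) * cauchyTransform2 η (z y) (w y) := fun y => by
    rw [cauchyTransform2, ← integral_const_mul]
    congr 1 with p
    rw [mul_inv]
    ring
  rw [Set.singleton_prod_singleton, integral_complex_indicator_one (measurableSet_singleton _)]
    at hlim
  simpa only [hG] using hlim

end TendstoNontangentially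

lemma tendstoNontangentially_vertical (x : ℝ) :
    TendstoNontangentially (fun y : ℝ => x + y * I) (𝓝[>] 0) x := by
  refine ⟨?_, 1, ?_⟩
  · have : Tendsto (fun y : ℝ => (y : ℂ)) (𝓝[>] 0) (𝓝 0) :=
      (continuous_ofReal.tendsto' 0 0 ofReal_zero).mono_left nhdsWithin_le_nhds
    simpa using tendsto_const_nhds.add (this.mul_const I)
  · filter_upwards [self_mem_nhdsWithin] with y (hy : 0 < y)
    simp [abs_of_pos hy, hy]

lemma eq_add_div_mul_of_pos {y : ℝ} (hy : 0 < y) (v : ℂ) (c : ℝ) :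
    v = c + (v - c) / (y * I) * (y * I) := by
  rw [div_mul_cancel₀ _ (mul_ne_zero (ofReal_ne_zero.2 hy.ne') I_ne_zero)]
  ring

-- An angular derivative with positive real part keeps the approach inside a Stolz angle.
lemma TendstoNontangentially.of_tendsto_div {f : ℝ → ℂ} {c : ℝ} {q : ℂ} (hq : 0 < q.re)
    (hf : Tendsto (fun y : ℝ => (f y - c) / (y * I)) (𝓝[>] 0) (𝓝 q)) :
    TendstoNontangentially f (𝓝[>] 0) c := by
  set Q := fun y : ℝ => (f y - c) / (y * I)
  have hyI : Tendsto (fun y : ℝ => (y : ℂ) * I) (𝓝[>] 0) (𝓝 0) := by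
    simpa using (tendstoNontangentially_vertical 0).1
  have hpos : ∀ᶠ y in 𝓝[>] (0 : ℝ), 0 < y := self_mem_nhdsWithin
  refine ⟨?_, 2 * (‖q‖ + 1) / q.re, ?_⟩
  · have := tendsto_const_nhds (x := (c : ℂ)).add (hf.mul hyI)
    rw [mul_zero, add_zero] at this
    refine this.congr' ?_
    filter_upwards [hpos] with y hy
    exact (eq_add_div_mul_of_pos hy (f y) c).symm
  · filter_upwards [hpos,
      (continuous_re.tendsto q).comp hf |>.eventually_const_lt (half_lt_self hq),
      (continuous_norm.tendsto q).comp hf |>.eventually_lt_const (lt_add_one ‖q‖)]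
      with y hy hre hnorm
    simp only [Function.comp_apply] at hre hnorm
    have him : (f y).im = (Q y).re * y := by
      conv_lhs => rw [eq_add_div_mul_of_pos hy (f y) c]
      simp [Q]
    have hnorm' : ‖f y - c‖ = ‖Q y‖ * y := by
      conv_lhs => rw [eq_add_div_mul_of_pos hy (f y) c]
      simp [Q, abs_of_pos hy]
    rw [him, hnorm']
    refine ⟨by nlinarith, ?_⟩
    rw [div_mul_eq_mul_div, le_div_iff₀ hq]
    have : ‖Q y‖ * q.re ≤ (‖q‖ + 1) * (2 * (Q y).re) :=
      mul_le_mul hnorm.le (by linarith) hq.le (by positivity)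
    nlinarith [mul_le_mul_of_nonneg_right this hy.le]

lemma ne_zero_of_tendsto_of_norm_sq_le {α : Type*} {l : Filter α} [l.NeBot]
    {A B Q₁ Q₂ : α → ℂ} {a b q₁ q₂ : ℂ} (hA : Tendsto A l (𝓝 a)) (hB : Tendsto B l (𝓝 b))
    (hQ₁ : Tendsto Q₁ l (𝓝 q₁)) (hQ₂ : Tendsto Q₂ l (𝓝 q₂)) (ha : a ≠ 0) (hq₁ : q₁ ≠ 0)
    (hq₂ : q₂ ≠ 0)
    (h : ∀ᶠ y in l, ‖Q₁ y‖ ^ 2 * ‖Q₂ y‖ ^ 2 * ‖A y‖ ^ 2 ≤ (Q₁ y).re * (Q₂ y).re * ‖B y‖ ^ 2) :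
    b ≠ 0 := by
  have hre₁ := (continuous_re.tendsto q₁).comp hQ₁
  have hre₂ := (continuous_re.tendsto q₂).comp hQ₂
  have hlim := le_of_tendsto_of_tendsto
    (((hQ₁.norm.pow 2).mul (hQ₂.norm.pow 2)).mul (hA.norm.pow 2))
    ((hre₁.mul hre₂).mul (hB.norm.pow 2)) h
  rintro rfl
  simp only [norm_zero, ne_eq, OfNat.ofNat_ne_zero, not_false_eq_true, zero_pow, mul_zero] at hlim
  have : 0 < ‖q₁‖ ^ 2 * ‖q₂‖ ^ 2 * ‖a‖ ^ 2 := by positivity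
  exact this.not_ge hlim

lemma norm_sq_mul_le_of_im_mul_im_bound {y : ℝ} (hy : 0 < y) {v₁ v₂ g h : ℂ} (c₁ c₂ : ℝ)
    (hbound : y * y * ‖g‖ ^ 2 ≤ v₁.im * v₂.im * ‖h‖ ^ 2) :
    ‖(v₁ - c₁) / (y * I)‖ ^ 2 * ‖(v₂ - c₂) / (y * I)‖ ^ 2 * ‖y * I * (y * I) * g‖ ^ 2 ≤
      ((v₁ - c₁) / (y * I)).re * ((v₂ - c₂) / (y * I)).re * ‖(v₁ - c₁) * (v₂ - c₂) * h‖ ^ 2 := by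
  have hre : ∀ (v : ℂ) (c : ℝ), ((v - c) / (y * I)).re = v.im / y := fun v c => by
    simp only [div_re, normSq_apply, sub_re, sub_im, mul_re, mul_im, ofReal_re, ofReal_im, I_re,
      I_im, mul_zero, mul_one, sub_self, sub_zero, add_zero, zero_add, zero_div]
    field_simp
  simp only [hre, norm_mul, norm_div, norm_I, norm_real, Real.norm_eq_abs, abs_of_pos hy, mul_one]
  have key : ‖g‖ ^ 2 ≤ v₁.im / y * (v₂.im / y) * ‖h‖ ^ 2 := by
    rw [div_mul_div_comm, div_mul_eq_mul_div, le_div_iff₀ (by positivity)]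
    linarith
  calc (‖v₁ - c₁‖ / y) ^ 2 * (‖v₂ - c₂‖ / y) ^ 2 * (y * y * ‖g‖) ^ 2
      = (‖v₁ - c₁‖ * ‖v₂ - c₂‖) ^ 2 * ‖g‖ ^ 2 := by field_simp
    _ ≤ (‖v₁ - c₁‖ * ‖v₂ - c₂‖) ^ 2 * (v₁.im / y * (v₂.im / y) * ‖h‖ ^ 2) := by gcongr
    _ = v₁.im / y * (v₂.im / y) * (‖v₁ - c₁‖ * ‖v₂ - c₂‖ * ‖h‖) ^ 2 := by ring

lemma inv_mul_mul_eq_of_inv_eq {s d₁ d₂ g h u v t : ℂ} (hd₁ : d₁ ≠ 0) (hd₂ : d₂ ≠ 0)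
    (hid : g⁻¹ = t / h + (1 - t) / (u * v)) :
    (s * s * g)⁻¹ = t * (d₁ / s) * (d₂ / s) / (d₁ * d₂ * h) + (1 - t) / (s * u * (s * v)) := by
  rw [mul_inv, hid]
  field_simp

lemma inv_eq_of_tendsto_of_eventuallyEq {α : Type*} {l : Filter α} [l.NeBot]
    {A B Q₁ Q₂ C₁ C₂ : α → ℂ} {a b q₁ q₂ m₁ m₂ t : ℂ} (hA : Tendsto A l (𝓝 a))
    (hB : Tendsto B l (𝓝 b)) (hQ₁ : Tendsto Q₁ l (𝓝 q₁)) (hQ₂ : Tendsto Q₂ l (𝓝 q₂))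
    (hC₁ : Tendsto C₁ l (𝓝 m₁)) (hC₂ : Tendsto C₂ l (𝓝 m₂)) (ha : a ≠ 0) (hb : b ≠ 0)
    (hm : m₁ * m₂ ≠ 0)
    (h : ∀ᶠ y in l, (A y)⁻¹ = t * Q₁ y * Q₂ y / B y + (1 - t) / (C₁ y * C₂ y)) :
    a⁻¹ = t * q₁ * q₂ / b + (1 - t) / (m₁ * m₂) :=
  tendsto_nhds_unique ((hA.inv₀ ha).congr' h)
    ((((tendsto_const_nhds.mul hQ₁).mul hQ₂).div hB hb).add
      (tendsto_const_nhds.div (hC₁.mul hC₂) hm))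

theorem stmt14_general
    (t : ℝ)
    (η ηt : Measure (ℝ × ℝ)) [IsProbabilityMeasure η] [IsProbabilityMeasure ηt]
    (ξ ζ : ℝ)
    (hatom : 0 < ηt ({(ξ, ζ)} : Set (ℝ × ℝ)))
    (hμ : 0 < (η.map Prod.fst) {ξ / t}) (hν : 0 < (η.map Prod.snd) {ζ / t})
    (ω₁ ω₂ : ℂ → ℂ)
    -- (i) the atoms of the marginals of the semigroup
    (hatomμ : ((ηt.map Prod.fst) {ξ}).toReal = t * ((η.map Prod.fst) {ξ / t}).toReal + 1 - t ∧
      0 < ((ηt.map Prod.fst) {ξ}).toReal)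
    (hatomν : ((ηt.map Prod.snd) {ζ}).toReal = t * ((η.map Prod.snd) {ζ / t}).toReal + 1 - t ∧
      0 < ((ηt.map Prod.snd) {ζ}).toReal)
    -- (ii) Julia–Carathéodory behavior of the subordination functions at the atoms
    (hJC₁ : Tendsto (fun y : ℝ => (ω₁ ((ξ : ℂ) + (y : ℂ) * Complex.I) - ((ξ / t : ℝ) : ℂ)) /
        ((y : ℂ) * Complex.I)) (𝓝[>] (0 : ℝ))
      (𝓝 ((((η.map Prod.fst) {ξ / t}).toReal /
        (t * ((η.map Prod.fst) {ξ / t}).toReal + 1 - t) : ℝ) : ℂ)))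
    (hJC₂ : Tendsto (fun y : ℝ => (ω₂ ((ζ : ℂ) + (y : ℂ) * Complex.I) - ((ζ / t : ℝ) : ℂ)) /
        ((y : ℂ) * Complex.I)) (𝓝[>] (0 : ℝ))
      (𝓝 ((((η.map Prod.snd) {ζ / t}).toReal /
        (t * ((η.map Prod.snd) {ζ / t}).toReal + 1 - t) : ℝ) : ℂ)))
    -- (iii) the subordination identity for the semigroup, for small y > 0
    (hsub : ∀ᶠ (y : ℝ) in 𝓝[>] (0 : ℝ),
      cauchyTransform2 ηt ((ξ : ℂ) + (y : ℂ) * Complex.I) ((ζ : ℂ) + (y : ℂ) * Complex.I) ≠ 0 ∧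
      cauchyTransform2 η (ω₁ ((ξ : ℂ) + (y : ℂ) * Complex.I))
        (ω₂ ((ζ : ℂ) + (y : ℂ) * Complex.I)) ≠ 0 ∧
      (cauchyTransform2 ηt ((ξ : ℂ) + (y : ℂ) * Complex.I)
          ((ζ : ℂ) + (y : ℂ) * Complex.I))⁻¹ =
        (t : ℂ) / cauchyTransform2 η (ω₁ ((ξ : ℂ) + (y : ℂ) * Complex.I))
            (ω₂ ((ζ : ℂ) + (y : ℂ) * Complex.I)) +
          (1 - (t : ℂ)) / (cauchyTransform (η.map Prod.fst) (ω₁ ((ξ : ℂ) + (y : ℂ) * Complex.I)) *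
            cauchyTransform (η.map Prod.snd) (ω₂ ((ζ : ℂ) + (y : ℂ) * Complex.I))) ∧
      cauchyTransform (η.map Prod.fst) (ω₁ ((ξ : ℂ) + (y : ℂ) * Complex.I)) =
        cauchyTransform (ηt.map Prod.fst) ((ξ : ℂ) + (y : ℂ) * Complex.I) ∧
      cauchyTransform (η.map Prod.snd) (ω₂ ((ζ : ℂ) + (y : ℂ) * Complex.I)) =
        cauchyTransform (ηt.map Prod.snd) ((ζ : ℂ) + (y : ℂ) * Complex.I))
    -- (iv) the bound of Proposition 4.1
    (hbound : ∀ z w : ℂ, 0 < z.im → 0 < w.im →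
      z.im * w.im * ‖cauchyTransform2 ηt z w‖ ^ 2 ≤
        (ω₁ z).im * (ω₂ w).im * ‖cauchyTransform2 η (ω₁ z) (ω₂ w)‖ ^ 2) :
    0 < η ({(ξ / t, ζ / t)} : Set (ℝ × ℝ)) ∧
    ((ηt.map Prod.fst) {ξ}).toReal * ((ηt.map Prod.snd) {ζ}).toReal /
        (ηt ({(ξ, ζ)} : Set (ℝ × ℝ))).toReal =
      t * ((η.map Prod.fst) {ξ / t}).toReal * ((η.map Prod.snd) {ζ / t}).toReal /
        (η ({(ξ / t, ζ / t)} : Set (ℝ × ℝ))).toReal + 1 - t := by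
  obtain ⟨hm₁_eq, hm₁_pos⟩ := hatomμ
  obtain ⟨hm₂_eq, hm₂_pos⟩ := hatomν
  rw [← hm₁_eq] at hJC₁
  rw [← hm₂_eq] at hJC₂
  have hα := div_pos (ENNReal.toReal_pos hμ.ne' (measure_ne_top _ _)) hm₁_pos
  have hβ := div_pos (ENNReal.toReal_pos hν.ne' (measure_ne_top _ _)) hm₂_pos
  have hb := ENNReal.toReal_pos hatom.ne' (measure_ne_top _ _)
  have hz := tendstoNontangentially_vertical ξ
  have hw := tendstoNontangentially_vertical ζ
  have hω₁ := TendstoNontangentially.of_tendsto_div (by simpa using hα) hJC₁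
  have hω₂ := TendstoNontangentially.of_tendsto_div (by simpa using hβ) hJC₂
  have hA := hz.tendsto_mul_mul_cauchyTransform2 hw ηt
  have hB := hω₁.tendsto_mul_mul_cauchyTransform2 hω₂ η
  have ha : ((η {(ξ / t, ζ / t)}).toReal : ℂ) ≠ 0 := by
    refine ne_zero_of_tendsto_of_norm_sq_le hA hB hJC₁ hJC₂ (by exact_mod_cast hb.ne')
      (by exact_mod_cast hα.ne') (by exact_mod_cast hβ.ne') ?_
    filter_upwards [self_mem_nhdsWithin] with y (hy : 0 < y)
    simp only [add_sub_cancel_left]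
    exact norm_sq_mul_le_of_im_mul_im_bound hy _ _
      (by simpa using hbound (ξ + y * I) (ζ + y * I) (by simpa) (by simpa))
  have hm₁ : ((((ηt.map Prod.fst) {ξ}).toReal : ℝ) : ℂ) ≠ 0 := by exact_mod_cast hm₁_pos.ne'
  have hm₂ : ((((ηt.map Prod.snd) {ζ}).toReal : ℝ) : ℂ) ≠ 0 := by exact_mod_cast hm₂_pos.ne'
  have hlim := inv_eq_of_tendsto_of_eventuallyEq hA hB hJC₁ hJC₂
    (hz.tendsto_mul_cauchyTransform _) (hw.tendsto_mul_cauchyTransform _)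
    (by exact_mod_cast hb.ne') ha (mul_ne_zero hm₁ hm₂) (by
      filter_upwards [hsub, hω₁.eventually_im_pos, hω₂.eventually_im_pos] with y hs him₁ him₂
      obtain ⟨-, -, hid, hμt, hνt⟩ := hs
      rw [hμt, hνt] at hid
      simpa only [add_sub_cancel_left] using inv_mul_mul_eq_of_inv_eq
        (sub_ofReal_ne_zero_of_im_pos him₁ _) (sub_ofReal_ne_zero_of_im_pos him₂ _) hid)
  refine ⟨pos_iff_ne_zero.2 fun h => ha (by simp [h]), ofReal_injective ?_⟩
  push_cast at hlim ⊢
  rw [div_eq_mul_inv, hlim]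
  field_simp
  ring

theorem stmt14
    (t : ℝ) (ht : 1 < t)
    (η ηt : Measure (ℝ × ℝ)) [IsProbabilityMeasure η] [IsProbabilityMeasure ηt]
    (ξ ζ : ℝ)
    (hatom : 0 < ηt ({(ξ, ζ)} : Set (ℝ × ℝ)))
    (hμ : 0 < (η.map Prod.fst) {ξ / t}) (hν : 0 < (η.map Prod.snd) {ζ / t})
    (ω₁ ω₂ : ℂ → ℂ)
    (hω₁ : ∀ z : ℂ, 0 < z.im → 0 < (ω₁ z).im)
    (hω₂ : ∀ w : ℂ, 0 < w.im → 0 < (ω₂ w).im)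
    -- (i) the atoms of the marginals of the semigroup
    (hatomμ : ((ηt.map Prod.fst) {ξ}).toReal = t * ((η.map Prod.fst) {ξ / t}).toReal + 1 - t ∧
      0 < ((ηt.map Prod.fst) {ξ}).toReal)
    (hatomν : ((ηt.map Prod.snd) {ζ}).toReal = t * ((η.map Prod.snd) {ζ / t}).toReal + 1 - t ∧
      0 < ((ηt.map Prod.snd) {ζ}).toReal)
    -- (ii) Julia–Carathéodory behavior of the subordination functions at the atoms
    (hJC₁ : Tendsto (fun y : ℝ => (ω₁ ((ξ : ℂ) + (y : ℂ) * Complex.I) - ((ξ / t : ℝ) : ℂ)) /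
        ((y : ℂ) * Complex.I)) (𝓝[>] (0 : ℝ))
      (𝓝 ((((η.map Prod.fst) {ξ / t}).toReal /
        (t * ((η.map Prod.fst) {ξ / t}).toReal + 1 - t) : ℝ) : ℂ)))
    (hJC₂ : Tendsto (fun y : ℝ => (ω₂ ((ζ : ℂ) + (y : ℂ) * Complex.I) - ((ζ / t : ℝ) : ℂ)) /
        ((y : ℂ) * Complex.I)) (𝓝[>] (0 : ℝ))
      (𝓝 ((((η.map Prod.snd) {ζ / t}).toReal /
        (t * ((η.map Prod.snd) {ζ / t}).toReal + 1 - t) : ℝ) : ℂ)))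
    -- (iii) the subordination identity for the semigroup, for small y > 0
    (hsub : ∀ᶠ (y : ℝ) in 𝓝[>] (0 : ℝ),
      cauchyTransform2 ηt ((ξ : ℂ) + (y : ℂ) * Complex.I) ((ζ : ℂ) + (y : ℂ) * Complex.I) ≠ 0 ∧
      cauchyTransform2 η (ω₁ ((ξ : ℂ) + (y : ℂ) * Complex.I))
        (ω₂ ((ζ : ℂ) + (y : ℂ) * Complex.I)) ≠ 0 ∧
      (cauchyTransform2 ηt ((ξ : ℂ) + (y : ℂ) * Complex.I)
          ((ζ : ℂ) + (y : ℂ) * Complex.I))⁻¹ =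
        (t : ℂ) / cauchyTransform2 η (ω₁ ((ξ : ℂ) + (y : ℂ) * Complex.I))
            (ω₂ ((ζ : ℂ) + (y : ℂ) * Complex.I)) +
          (1 - (t : ℂ)) / (cauchyTransform (η.map Prod.fst) (ω₁ ((ξ : ℂ) + (y : ℂ) * Complex.I)) *
            cauchyTransform (η.map Prod.snd) (ω₂ ((ζ : ℂ) + (y : ℂ) * Complex.I))) ∧
      cauchyTransform (η.map Prod.fst) (ω₁ ((ξ : ℂ) + (y : ℂ) * Complex.I)) =
        cauchyTransform (ηt.map Prod.fst) ((ξ : ℂ) + (y : ℂ) * Complex.I) ∧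
      cauchyTransform (η.map Prod.snd) (ω₂ ((ζ : ℂ) + (y : ℂ) * Complex.I)) =
        cauchyTransform (ηt.map Prod.snd) ((ζ : ℂ) + (y : ℂ) * Complex.I))
    -- (iv) the bound of Proposition 4.1
    (hbound : ∀ z w : ℂ, 0 < z.im → 0 < w.im →
      z.im * w.im * ‖cauchyTransform2 ηt z w‖ ^ 2 ≤
        (ω₁ z).im * (ω₂ w).im * ‖cauchyTransform2 η (ω₁ z) (ω₂ w)‖ ^ 2) :
    0 < η ({(ξ / t, ζ / t)} : Set (ℝ × ℝ)) ∧
    ((ηt.map Prod.fst) {ξ}).toReal * ((ηt.map Prod.snd) {ζ}).toReal /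
        (ηt ({(ξ, ζ)} : Set (ℝ × ℝ))).toReal =
      t * ((η.map Prod.fst) {ξ / t}).toReal * ((η.map Prod.snd) {ζ / t}).toReal /
        (η ({(ξ / t, ζ / t)} : Set (ℝ × ℝ))).toReal + 1 - t :=
  stmt14_general t η ηt ξ ζ hatom hμ hν ω₁ ω₂ hatomμ hatomν hJC₁ hJC₂ hsub hbound
end
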